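/- arXiv:2005.01915 — 4 statements merged into one kernel-verified Lean document; each statement's English description precedes it below -/
import Mathlib

section
/- Let $\theta$ be an algebraic number with $\theta^n = a$ for a nonzero integer $a$, and suppose $|a| = \prod_{j=1}^{n-1} a_j^j$ where the $a_j$ are squarefree and pairwise coprime. For $0 \leq m \leq n-1$, let $C_m = \prod_{j=1}^{n-1} a_j^{\lfloor jm/n \rfloor}$. Then $\theta^m / C_m$ is an algebraic integer; indeed it is a root of the monic polynomial $x^n - \mathrm{sgn}(a)^m \prod_{j=1}^{n-1} a_j^{\,jm - n\lfloor jm/n \rfloor}$. -/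
/-!
Write `|a| = ∏ aⱼ ^ j` and split each exponent `j m = n ⌊j m / n⌋ + (j m mod n)`. Then
`θ ^ (m n) = a ^ m = sgn(a) ^ m · C_m ^ n · ∏ aⱼ ^ (j m mod n)`, so dividing by `C_m ^ n` shows
that `(θ ^ m / C_m) ^ n` is an integer, and a root of an integer is an algebraic integer.
-/

open Finset

lemma Finset.prod_pow_eq_prod_pow_div_pow_mul_prod_pow_mod {ι M : Type*} [CommMonoid M]
    (s : Finset ι) (b : ι → M) (e : ι → ℕ) (n : ℕ) :
    ∏ i ∈ s, b i ^ e i = (∏ i ∈ s, b i ^ (e i / n)) ^ n * ∏ i ∈ s, b i ^ (e i % n) := by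
  rw [← prod_pow, ← prod_mul_distrib]
  refine prod_congr rfl fun i _ => ?_
  rw [← pow_mul, ← pow_add, mul_comm, Nat.div_add_mod]

lemma Int.pow_eq_sign_pow_mul_of_abs_eq_prod_pow {ι : Type*} (s : Finset ι)
    (a : ℤ) (b : ι → ℤ) (e : ι → ℕ) (habs : |a| = ∏ i ∈ s, b i ^ e i) (m n : ℕ) :
    a ^ m = a.sign ^ m * ((∏ i ∈ s, b i ^ (e i * m / n)) ^ n *
      ∏ i ∈ s, b i ^ (e i * m % n)) := by
  rw [← prod_pow_eq_prod_pow_div_pow_mul_prod_pow_mod]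
  conv_lhs => rw [← Int.sign_mul_abs a, mul_pow, habs, ← prod_pow]
  simp only [← pow_mul]

lemma isIntegral_of_pow_eq_algebraMap {R A : Type*} [CommRing R] [Ring A] [Algebra R A]
    {x : A} {n : ℕ} (hn : 0 < n) {c : R} (h : x ^ n = algebraMap R A c) : IsIntegral R x :=
  IsIntegral.of_pow hn (h ▸ isIntegral_algebraMap)

theorem theta_pow_div_C_isIntegral_general (n : ℕ) (hn : 1 ≤ n) (a : ℤ) (ha : a ≠ 0)
    (θ : ℂ) (hθ : θ ^ n = (a : ℂ))
    (aa : ℕ → ℤ)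
    (hfac : |a| = ∏ j ∈ Finset.Ico 1 n, aa j ^ j)
    (m : ℕ)
    (Cm : ℤ) (hCm : Cm = ∏ j ∈ Finset.Ico 1 n, aa j ^ (j * m / n)) :
    IsIntegral ℤ (θ ^ m / (Cm : ℂ)) ∧
      (θ ^ m / (Cm : ℂ)) ^ n =
        (Int.sign a : ℂ) ^ m * ∏ j ∈ Finset.Ico 1 n, (aa j : ℂ) ^ (j * m - n * (j * m / n)) := by
  set r := ∏ j ∈ Finset.Ico 1 n, aa j ^ (j * m % n)
  have ha_pow : a ^ m = a.sign ^ m * (Cm ^ n * r) := by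
    rw [hCm]
    exact Int.pow_eq_sign_pow_mul_of_abs_eq_prod_pow _ a aa id hfac m n
  have hCm0 : (Cm : ℂ) ≠ 0 := by
    intro hC
    apply pow_ne_zero m ha
    rw [ha_pow, Int.cast_eq_zero.mp hC, zero_pow (by omega), zero_mul, mul_zero]
  have key : (θ ^ m / (Cm : ℂ)) ^ n = ((a.sign ^ m * r : ℤ) : ℂ) := by
    rw [div_pow, ← pow_mul, mul_comm, pow_mul, hθ, ← Int.cast_pow, ha_pow]
    push_cast
    rw [mul_left_comm, mul_div_cancel_left₀ _ (pow_ne_zero n hCm0)]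
  refine ⟨isIntegral_of_pow_eq_algebraMap (by omega) key, ?_⟩
  simp only [key, r, ← Nat.mod_eq_sub_mul_div]
  push_cast
  rfl

theorem theta_pow_div_C_isIntegral (n : ℕ) (hn : 1 ≤ n) (a : ℤ) (ha : a ≠ 0)
    (θ : ℂ) (hθ : θ ^ n = (a : ℂ))
    (aa : ℕ → ℤ) (hsq : ∀ j ∈ Finset.Ico 1 n, Squarefree (aa j))
    (hcop : ∀ i ∈ Finset.Ico 1 n, ∀ j ∈ Finset.Ico 1 n, i ≠ j → IsCoprime (aa i) (aa j))
    (hfac : |a| = ∏ j ∈ Finset.Ico 1 n, aa j ^ j)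
    (m : ℕ) (hm : m ≤ n - 1)
    (Cm : ℤ) (hCm : Cm = ∏ j ∈ Finset.Ico 1 n, aa j ^ (j * m / n)) :
    IsIntegral ℤ (θ ^ m / (Cm : ℂ)) ∧
      (θ ^ m / (Cm : ℂ)) ^ n =
        (Int.sign a : ℂ) ^ m * ∏ j ∈ Finset.Ico 1 n, (aa j : ℂ) ^ (j * m - n * (j * m / n)) :=
  theta_pow_div_C_isIntegral_general n hn a ha θ hθ aa hfac m Cm hCm
end

section
/- Let $K = \mathbb{Q}(\theta)$ where $\theta$ is a root of an irreducible polynomial $x^n - a \in \mathbb{Z}[x]$. Let $p$ be a prime with $p^s \| n$ ($s \geq 1$), $p \nmid a$, and suppose $r = v_p(a^{p-1}-1) - 1 \geq 1$. Fix $k$ with $1 \leq k \leq \min\{r,s\}$, let $b'$ be an integer with $ab' \equiv 1 \pmod{p^{k+1}}$, set $a' = (b')^{p^{s-k-1}}$ if $k < s$ and $a' = b'$ if $k = s$, and let $n' = n/p^k$. Then the element $\eta_k = \sum_{j=0}^{p^k - 1} (a' \theta^{n'})^j$ satisfies $\eta_k / p^k$ is an algebraic integer. -/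
/-!
Put `β = a' θ ^ n'` and `N = p ^ k`. Then `β ^ N = a a' ^ N`, and `a' ^ N` is a power `b' ^ p ^ j`;
as `p ^ j ≡ 1 mod p - 1` and `a ^ (p - 1) ≡ 1 mod p ^ (k + 1)`, this gives `β ^ N ≡ 1 mod p ^ (k + 1)`,
say `β ^ N - 1 = p ^ k m` with `p ∣ m`.

For `γ = η_k / p ^ k` and `δ = β - 1` we get `γ δ = m` from `η_k (β - 1) = β ^ N - 1`, and
`p ^ k γ = ∑_{i<N} C(N, i+1) δ ^ i`. Multiplying the latter by `γ ^ (N - 1)` turns it into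
`p ^ k γ ^ N = ∑_{i<N} C(N, i+1) m ^ i γ ^ (N-1-i)`, a monic equation for `γ` over `ℤ` once divided
by `p ^ k`: since `v_p C(p ^ k, i+1) = k - v_p (i+1)` and `v_p (i+1) ≤ i ≤ v_p (m ^ i)`, every
coefficient `C(N, i+1) m ^ i` is divisible by `p ^ k`.
-/

open Polynomial in
theorem isIntegral_of_pow_eq_sum {R A : Type*} [CommRing R] [CommRing A] [Algebra R A] {x : A}
    {N : ℕ} (d : ℕ → R)
    (h : x ^ N = ∑ i ∈ Finset.range N, algebraMap R A (d i) * x ^ (N - 1 - i)) :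
    IsIntegral R x := by
  refine ⟨X ^ N - ∑ i ∈ Finset.range N, C (d i) * X ^ (N - 1 - i), monic_X_pow_sub ?_, ?_⟩
  · rw [← mem_degreeLT]
    refine Submodule.sum_mem _ fun i hi => mem_degreeLT.2 ((degree_C_mul_X_pow_le _ _).trans_lt ?_)
    have := Finset.mem_range.1 hi
    exact_mod_cast (by omega : N - 1 - i < N)
  · simp [eval₂_finsetSum, h]

theorem Nat.Prime.pow_dvd_choose_mul_pow {p : ℕ} (hp : p.Prime) {k i : ℕ} (hi : i < p ^ k)
    {m : ℤ} (hm : (p : ℤ) ∣ m) : (p : ℤ) ^ k ∣ ((p ^ k).choose (i + 1) : ℤ) * m ^ i := by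
  set v := (i + 1).factorization p
  have hv : p ^ v ∣ i + 1 := Nat.ordProj_dvd (i + 1) p
  have hvi : v ≤ i := by
    have := Nat.le_of_dvd i.succ_pos hv
    have := Nat.lt_pow_self (n := v) hp.one_lt
    omega
  have hchoose : p ^ (k - v) ∣ (p ^ k).choose (i + 1) := by
    rw [← Nat.factorization_choose_prime_pow hp hi i.succ_ne_zero]
    exact Nat.ordProj_dvd _ _
  calc (p : ℤ) ^ k ∣ (p : ℤ) ^ (k - v) * (p : ℤ) ^ v := by
        rw [← pow_add]; exact pow_dvd_pow _ (by omega)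
    _ ∣ _ := mul_dvd_mul (by exact_mod_cast hchoose)
        ((pow_dvd_pow_of_dvd hm v).trans (pow_dvd_pow m hvi))

theorem mul_pow_eq_one_of_modEq {M : Type*} [CommMonoid M] {x y : M} {q e : ℕ}
    (hxy : x * y = 1) (hx : x ^ q = 1) (he : e ≡ 1 [MOD q]) : x * y ^ e = 1 := by
  have hy : y ^ q = 1 := by simpa [mul_pow, hx] using congrArg (· ^ q) hxy
  have he' : e % orderOf y = 1 % orderOf y := he.of_dvd (orderOf_dvd_of_pow_eq_one hy)
  rw [← pow_mod_orderOf, he', pow_mod_orderOf, pow_one, hxy]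

theorem mul_pow_eq_sum_choose_mul_pow {A : Type*} [CommRing A] {N : ℕ} (hN : N ≠ 0)
    {q γ δ m : A} (hγδ : γ * δ = m)
    (hγ : q * γ = ∑ i ∈ Finset.range N, (N.choose (i + 1) : A) * δ ^ i) :
    q * γ ^ N = ∑ i ∈ Finset.range N, (N.choose (i + 1) : A) * m ^ i * γ ^ (N - 1 - i) := by
  calc q * γ ^ N = γ ^ (N - 1) * (q * γ) := by
        rw [mul_left_comm, ← pow_succ, Nat.sub_add_cancel (Nat.one_le_iff_ne_zero.2 hN)]
    _ = _ := by
        rw [hγ, Finset.mul_sum]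
        refine Finset.sum_congr rfl fun i hi => ?_
        have hi : i + (N - 1 - i) = N - 1 := by have := Finset.mem_range.1 hi; omega
        rw [show γ ^ (N - 1) = γ ^ i * γ ^ (N - 1 - i) by rw [← pow_add, hi], ← hγδ, mul_pow]
        ring

theorem isIntegral_geom_sum_div_prime_pow {K : Type*} [Field K] [CharZero K] {p : ℕ}
    (hp : p.Prime) {k : ℕ} {β : K} {c : ℤ} (hβ : β ^ p ^ k = c) (hc : c ≡ 1 [ZMOD p ^ (k + 1)]) :
    IsIntegral ℤ ((∑ j ∈ Finset.range (p ^ k), β ^ j) / (p : K) ^ k) := by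
  set N := p ^ k
  set γ := (∑ j ∈ Finset.range N, β ^ j) / (p : K) ^ k
  obtain ⟨m', hm'⟩ := hc.symm.dvd
  set m := (p : ℤ) * m'
  have hpk : (p : K) ^ k ≠ 0 := pow_ne_zero _ (Nat.cast_ne_zero.2 hp.ne_zero)
  have hγ : (p : K) ^ k * γ = ∑ i ∈ Finset.range N, (N.choose (i + 1) : K) * (β - 1) ^ i := by
    rw [mul_div_cancel₀ _ hpk]
    simpa using congrArg (Polynomial.aeval (β - 1))
      (Polynomial.geom_sum_X_comp_X_add_one_eq_sum (R := ℤ) N)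
  have hγδ : γ * (β - 1) = m := by
    have hc1 : (c : K) - 1 = (p : K) ^ k * m := by
      exact_mod_cast congrArg (Int.cast : ℤ → K) (show c - 1 = (p : ℤ) ^ k * m by rw [hm']; ring)
    rw [div_mul_eq_mul_div, geom_sum_mul, hβ, hc1, mul_div_cancel_left₀ _ hpk]
  have hrel := mul_pow_eq_sum_choose_mul_pow (pow_ne_zero k hp.ne_zero) hγδ hγ
  refine isIntegral_of_pow_eq_sum (N := N)
    (fun i => (N.choose (i + 1) * m ^ i : ℤ) / (p : ℤ) ^ k) ?_
  apply mul_left_cancel₀ hpk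
  rw [hrel, Finset.mul_sum]
  refine Finset.sum_congr rfl fun i hi => ?_
  have hd := Int.mul_ediv_cancel'
    (hp.pow_dvd_choose_mul_pow (Finset.mem_range.1 hi) (dvd_mul_right (p : ℤ) m'))
  rw [algebraMap_int_eq, eq_intCast, ← mul_assoc]
  congr 1
  exact_mod_cast hd.symm

open Polynomial in
theorem eta_div_pk_isIntegral_general (n : ℕ) (a : ℤ) (θ : ℂ) (hθ : θ ^ n = (a : ℂ))
    (p s : ℕ) (hp : p.Prime) (hps : p ^ s ∣ n)
    (r : ℕ) (hr : r = padicValInt p (a ^ (p - 1) - 1) - 1) (hr1 : 1 ≤ r)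
    (k : ℕ) (hk2 : k ≤ min r s)
    (b' : ℤ) (hb' : a * b' ≡ 1 [ZMOD (p : ℤ) ^ (k + 1)])
    (a' : ℤ) (ha' : a' = if k < s then b' ^ p ^ (s - k - 1) else b')
    (n' : ℕ) (hn' : n' = n / p ^ k) :
    IsIntegral ℤ ((∑ j ∈ Finset.range (p ^ k), ((a' : ℂ) * θ ^ n') ^ j) / (p : ℂ) ^ k) := by
  have := Fact.mk hp
  obtain ⟨j, hj⟩ : ∃ j, a' ^ p ^ k = b' ^ p ^ j := by
    split_ifs at ha' with hks
    · exact ⟨s - 1, by rw [ha', ← pow_mul, ← pow_add]; congr 2; omega⟩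
    · exact ⟨k, by rw [ha']⟩
  have hn : n' * p ^ k = n := by
    rw [hn']; exact Nat.div_mul_cancel ((pow_dvd_pow p (by omega)).trans hps)
  have hβ : ((a' : ℂ) * θ ^ n') ^ p ^ k = ((a * b' ^ p ^ j : ℤ) : ℂ) := by
    rw [mul_pow, ← pow_mul, hn, hθ, ← hj]; push_cast; ring
  have hfermat : a ^ (p - 1) ≡ 1 [ZMOD (p : ℤ) ^ (k + 1)] :=
    (Int.modEq_of_dvd ((padicValInt_dvd_iff _ _).2 (Or.inr (by omega)))).symm
  refine isIntegral_geom_sum_div_prime_pow hp hβ ?_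
  have hq : ((p ^ (k + 1) : ℕ) : ℤ) = (p : ℤ) ^ (k + 1) := by push_cast; rfl
  rw [← hq, ← ZMod.intCast_eq_intCast_iff] at hb' hfermat ⊢
  push_cast at hb' hfermat ⊢
  exact mul_pow_eq_one_of_modEq hb' hfermat (by simpa using (Nat.modEq_sub hp.one_le).pow j)

open Polynomial in
theorem eta_div_pk_isIntegral (n : ℕ) (a : ℤ) (θ : ℂ) (hθ : θ ^ n = (a : ℂ))
    (hirr : Irreducible ((X : ℚ[X]) ^ n - C (a : ℚ)))
    (p s : ℕ) (hp : p.Prime) (hs : 1 ≤ s) (hps : p ^ s ∣ n) (hps' : ¬ p ^ (s + 1) ∣ n)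
    (ha : ¬ (p : ℤ) ∣ a)
    (r : ℕ) (hr : r = padicValInt p (a ^ (p - 1) - 1) - 1) (hr1 : 1 ≤ r)
    (k : ℕ) (hk1 : 1 ≤ k) (hk2 : k ≤ min r s)
    (b' : ℤ) (hb' : a * b' ≡ 1 [ZMOD (p : ℤ) ^ (k + 1)])
    (a' : ℤ) (ha' : a' = if k < s then b' ^ p ^ (s - k - 1) else b')
    (n' : ℕ) (hn' : n' = n / p ^ k) :
    IsIntegral ℤ ((∑ j ∈ Finset.range (p ^ k), ((a' : ℂ) * θ ^ n') ^ j) / (p : ℂ) ^ k) :=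
  eta_div_pk_isIntegral_general n a θ hθ p s hp hps r hr hr1 k hk2 b' hb' a' ha' n' hn'
end

section
/- With notation as in Lemma 1 of the paper: let $\eta_k = \sum_{j=0}^{p^k-1}(a'\theta^{n'})^j$ where $\theta^{n'p^k} = a$ and $a(a')^{p^k} \neq 1$. Then $\eta_k$ satisfies the monic polynomial identity $\eta_k^{p^k} = \sum_{j=1}^{p^k} \binom{p^k}{j} (a(a')^{p^k} - 1)^{j-1} \eta_k^{p^k - j}$. -/
open Finset

section

variable {R : Type*} [CommRing R]

theorem mul_sum_Icc_choose_mul_pow_mul_pow (y d : R) (m : ℕ) :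
    d * ∑ j ∈ Icc 1 m, (m.choose j : R) * d ^ (j - 1) * y ^ (m - j) = (y + d) ^ m - y ^ m := by
  rw [add_comm y, add_pow, sum_range_succ', ← Ico_add_one_right_eq_Icc, sum_Ico_eq_sum_range,
    mul_sum, Nat.add_sub_cancel]
  simp only [Nat.choose_zero_right, Nat.cast_one, pow_zero, Nat.sub_zero, one_mul, mul_one,
    add_sub_cancel_right]
  refine sum_congr rfl fun j _ => ?_
  rw [add_comm 1 j, Nat.add_sub_cancel]
  ring

theorem geom_sum_pow_eq_sum_choose [IsDomain R] (x : R) (m : ℕ) (hx : x ^ m ≠ 1) :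
    (∑ j ∈ range m, x ^ j) ^ m = ∑ j ∈ Icc 1 m,
      (m.choose j : R) * (x ^ m - 1) ^ (j - 1) * (∑ j ∈ range m, x ^ j) ^ (m - j) := by
  set η := ∑ j ∈ range m, x ^ j
  -- `x η = η + (x ^ m - 1)`, so raising to the `m`-th power gives `x ^ m η ^ m = (η + (x ^ m - 1)) ^ m`.
  have hxη : η + (x ^ m - 1) = x * η := by linear_combination -geom_sum_mul x m
  refine mul_left_cancel₀ (sub_ne_zero.mpr hx) ?_
  rw [mul_sum_Icc_choose_mul_pow_mul_pow, hxη, mul_pow]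
  ring

end

theorem eta_monic_identity_general (p k n' : ℕ) (a a' : ℤ) (θ : ℂ)
    (hθ : θ ^ (n' * p ^ k) = (a : ℂ)) (hne : a * a' ^ p ^ k ≠ 1)
    (η : ℂ) (hη : η = ∑ j ∈ Finset.range (p ^ k), ((a' : ℂ) * θ ^ n') ^ j) :
    η ^ p ^ k = ∑ j ∈ Finset.Icc 1 (p ^ k),
      ((p ^ k).choose j : ℂ) * ((a : ℂ) * (a' : ℂ) ^ p ^ k - 1) ^ (j - 1) * η ^ (p ^ k - j) := by
  have hpow : ((a' : ℂ) * θ ^ n') ^ p ^ k = (a : ℂ) * (a' : ℂ) ^ p ^ k := by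
    rw [mul_pow, ← pow_mul, hθ, mul_comm]
  have hne' : ((a' : ℂ) * θ ^ n') ^ p ^ k ≠ 1 := by
    rw [hpow]
    exact_mod_cast hne
  rw [← hpow, hη]
  exact geom_sum_pow_eq_sum_choose _ _ hne'

theorem eta_monic_identity (p k n' : ℕ) (hp : p.Prime) (a a' : ℤ) (θ : ℂ)
    (hθ : θ ^ (n' * p ^ k) = (a : ℂ)) (hne : a * a' ^ p ^ k ≠ 1)
    (η : ℂ) (hη : η = ∑ j ∈ Finset.range (p ^ k), ((a' : ℂ) * θ ^ n') ^ j) :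
    η ^ p ^ k = ∑ j ∈ Finset.Icc 1 (p ^ k),
      ((p ^ k).choose j : ℂ) * ((a : ℂ) * (a' : ℂ) ^ p ^ k - 1) ^ (j - 1) * η ^ (p ^ k - j) :=
  eta_monic_identity_general p k n' a a' θ hθ hne η hη
end

section
/- Let $K = \mathbb{Q}(\theta)$ with $\theta$ a root of irreducible $x^n - a \in \mathbb{Z}[x]$, $p$ a prime with $p^s \| n$, $p \nmid a$, and $r = v_p(a^{p-1}-1)-1 \geq 1$. For $0 \leq m \leq n-1$, let $k_m$ be the largest integer $\leq \min\{r,s\}$ with $m = n - n/p^{k_m} + j_m$, $j_m \geq 0$. Write $|a| = \prod_j a_j^j$ with $a_j$ squarefree and pairwise coprime, $C_m = \prod_j a_j^{\lfloor jm/n\rfloor}$. Let $b'_m$ satisfy $a b'_m \equiv 1 \pmod{p^{k_m+1}}$, set $a'_m = (b'_m)^{p^{s-k_m-1}}$ if $k_m < s$, else $a'_m = b'_m$, let $n'_m = n/p^{k_m}$, and let $w_m$ satisfy $w_m C_m (a'_m)^{p^{k_m}-1} \equiv 1 \pmod{p^{k_m}}$. Define $\delta_m = w_m C_m \theta^{j_m}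 \sum_{j=0}^{p^{k_m}-2}(a'_m \theta^{n'_m})^j$ if $k_m > 0$ and $\delta_m = 0$ if $k_m = 0$. Then $(\theta^m + \delta_m)/(p^{k_m} C_m)$ is an algebraic integer. -/
/-!
Put `u = a' θ^(n/p^k)`. From `a^(p-1) ≡ 1` and `a b' ≡ 1` modulo `p^(k+1)` we get
`u^(p^k) = a a'^(p^k) = 1 + p^(k+1) y` with `y ∈ ℤ`, and writing `w C a'^(p^k-1) = 1 + p^k z`,
  `(θ^m + δ) / (p^k C) = w θ^j (∑_{i<p^k} u^i) / p^k - z θ^m / C`.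
Here `θ^m / C` is integral because `C^n ∣ a^m`. Integrality of `(∑_{i<p^k} u^i) / p^k` is checked
in every valuation subring of `ℂ`. If `u ≡ 1 mod p` there, each step of
`∑_{i<p^(j+1)} u^i = (∑_{i<p^j} u^i) ∑_{l<p} u^(l p^j)` gains a factor `p`, as
`∑_{l<p} t^l ≡ p mod (t - 1)`. Otherwise `p / (u - 1)` lies in the valuation subring and
`∑_{i<p^k} u^i = p^k (p / (u - 1)) y`.
-/

theorem isIntegral_int_iff_forall_mem_valuationSubring {K : Type*} [Field K] {x : K} :
    IsIntegral ℤ x ↔ ∀ V : ValuationSubring K, x ∈ V := by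
  refine ⟨fun hx V => ?_, fun h => by_contra fun hx => ?_⟩
  · obtain ⟨y, rfl⟩ := IsIntegrallyClosed.isIntegral_iff.mp (hx.tower_top (A := V))
    exact y.2
  · obtain ⟨V, -, hxV⟩ :=
      Subring.exists_le_valuationSubring_of_isIntegrallyClosedIn
        (R := (integralClosure ℤ K).toSubring) hx
    exact hxV (h V)

theorem geom_sum_range_mul {R : Type*} [CommRing R] (x : R) (a b : ℕ) :
    ∑ i ∈ Finset.range (a * b), x ^ i
      = (∑ i ∈ Finset.range a, x ^ i) * ∑ l ∈ Finset.range b, (x ^ a) ^ l := by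
  induction b with
  | zero => simp
  | succ b ih =>
    rw [Nat.mul_succ, Finset.sum_range_add, ih, Finset.sum_range_succ, mul_add, Finset.mul_sum,
      Finset.sum_mul]
    congr 1
    refine Finset.sum_congr rfl fun i _ => ?_
    rw [← pow_mul, ← pow_add]; ring

namespace Valuation

variable {R Γ₀ : Type*} [CommRing R] [LinearOrderedCommGroupWithZero Γ₀] (v : Valuation R Γ₀)

theorem map_geom_sum_le_one {x : R} (hx : v x ≤ 1) (n : ℕ) :
    v (∑ i ∈ Finset.range n, x ^ i) ≤ 1 :=
  v.map_sum_le fun i _ => by rw [map_pow]; exact pow_le_one' hx i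

theorem map_geom_sum_le_of_map_sub_one_le {t : R} {p : ℕ} (ht : v t ≤ 1)
    (h : v (t - 1) ≤ v p) : v (∑ l ∈ Finset.range p, t ^ l) ≤ v p := by
  have hsplit : ∑ l ∈ Finset.range p, t ^ l
      = (t - 1) * ∑ l ∈ Finset.range p, ∑ i ∈ Finset.range l, t ^ i + p := by
    rw [Finset.mul_sum]
    simp only [mul_geom_sum, Finset.sum_sub_distrib]
    simp
  rw [hsplit]
  refine (v.map_add _ _).trans (max_le ?_ le_rfl)
  calc v ((t - 1) * ∑ l ∈ Finset.range p, ∑ i ∈ Finset.range l, t ^ i)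
      ≤ v p * 1 := by
        rw [map_mul]
        exact mul_le_mul' h (v.map_sum_le fun l _ => v.map_geom_sum_le_one ht l)
    _ = v p := mul_one _

theorem map_geom_sum_pow_le_of_map_sub_one_le {u : R} {p : ℕ} (hu : v u ≤ 1)
    (h : v (u - 1) ≤ v p) (k : ℕ) : v (∑ i ∈ Finset.range (p ^ k), u ^ i) ≤ v p ^ k := by
  induction k with
  | zero => simp
  | succ k ih =>
    rw [pow_succ, geom_sum_range_mul, map_mul, pow_succ]
    refine mul_le_mul' ih
      (v.map_geom_sum_le_of_map_sub_one_le (by rw [map_pow]; exact pow_le_one' hu _) ?_)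
    calc v (u ^ p ^ k - 1) = v (∑ i ∈ Finset.range (p ^ k), u ^ i) * v (u - 1) := by
          rw [← map_mul, geom_sum_mul]
      _ ≤ 1 * v p := mul_le_mul' (v.map_geom_sum_le_one hu _) h
      _ = v p := one_mul _

theorem map_geom_sum_pow_le {u y : R} {p k : ℕ} (hu : v u ≤ 1) (hy : v y ≤ 1)
    (h : u ^ p ^ k = 1 + (p : R) ^ (k + 1) * y) :
    v (∑ i ∈ Finset.range (p ^ k), u ^ i) ≤ v p ^ k := by
  rcases le_or_gt (v (u - 1)) (v p) with hle | hlt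
  · exact v.map_geom_sum_pow_le_of_map_sub_one_le hu hle k
  · refine le_of_mul_le_mul_right ?_ (zero_le.trans_lt hlt)
    calc v (∑ i ∈ Finset.range (p ^ k), u ^ i) * v (u - 1) = v p ^ k * v p * v y := by
          rw [← map_mul, geom_sum_mul, h, add_sub_cancel_left, map_mul, map_pow, pow_succ]
      _ ≤ v p ^ k * v (u - 1) * 1 := mul_le_mul' (mul_le_mul' le_rfl hlt.le) hy
      _ = v p ^ k * v (u - 1) := mul_one _

end Valuation

theorem isIntegral_geom_sum_div_pow {K : Type*} [Field K] {u y : K} {p k : ℕ}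
    (hu : IsIntegral ℤ u) (hy : IsIntegral ℤ y) (hp : (p : K) ≠ 0)
    (h : u ^ p ^ k = 1 + (p : K) ^ (k + 1) * y) :
    IsIntegral ℤ ((∑ i ∈ Finset.range (p ^ k), u ^ i) / (p : K) ^ k) := by
  simp only [isIntegral_int_iff_forall_mem_valuationSubring,
    ← ValuationSubring.valuation_le_one_iff] at hu hy ⊢
  intro V
  rw [map_div₀, map_pow, div_le_one₀ (pow_pos ((V.valuation.pos_iff).mpr hp) _)]
  exact V.valuation.map_geom_sum_pow_le (hu V) (hy V) h

theorem Finset.prod_pow_mul_div_pow_dvd {ι M : Type*} [CommMonoid M] (s : Finset ι)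
    (f : ι → M) (e : ι → ℕ) (m n : ℕ) :
    (∏ i ∈ s, f i ^ (e i * m / n)) ^ n ∣ (∏ i ∈ s, f i ^ e i) ^ m := by
  simp only [← Finset.prod_pow, ← pow_mul]
  exact Finset.prod_dvd_prod_of_dvd _ _ fun i _ => pow_dvd_pow _ (Nat.div_mul_le_self _ _)

theorem isIntegral_pow_div_of_pow_dvd {K : Type*} [Field K] {θ : K} {a c : ℤ} {m n : ℕ}
    (hn : n ≠ 0) (hθ : θ ^ n = a) (hc : c ^ n ∣ a ^ m) : IsIntegral ℤ (θ ^ m / c) := by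
  obtain ⟨d, hd⟩ := hc
  rcases eq_or_ne (c : K) 0 with hc0 | hc0
  · simpa [hc0] using isIntegral_zero
  refine IsIntegral.of_pow (Nat.pos_of_ne_zero hn) ?_
  have : (θ ^ m / c) ^ n = d := by
    rw [div_pow, ← pow_mul, mul_comm, pow_mul, hθ, ← Int.cast_pow, hd]
    push_cast
    field_simp
  exact this ▸ isIntegral_intCast d

theorem Int.mul_pow_pow_modEq_one {a b q : ℤ} {p : ℕ} (hp : p ≠ 0)
    (ha : a ^ (p - 1) ≡ 1 [ZMOD q]) (hab : a * b ≡ 1 [ZMOD q]) (i : ℕ) :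
    a * b ^ p ^ i ≡ 1 [ZMOD q] := by
  obtain ⟨t, ht⟩ := Nat.sub_dvd_pow_sub_pow p 1 i
  have hpow : a ^ p ^ i ≡ a [ZMOD q] := by
    have : a ^ p ^ i = a * (a ^ (p - 1)) ^ t := by
      rw [one_pow] at ht
      rw [← pow_mul, ← ht, ← pow_succ',
        Nat.sub_add_cancel (Nat.one_le_pow _ _ (Nat.pos_of_ne_zero hp))]
    simpa [this] using (ha.pow t).mul_left a
  calc a * b ^ p ^ i ≡ a ^ p ^ i * b ^ p ^ i [ZMOD q] := (hpow.mul_right _).symm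
    _ = (a * b) ^ p ^ i := (mul_pow _ _ _).symm
    _ ≡ 1 [ZMOD q] := by simpa using hab.pow (p ^ i)

theorem isIntegral_geom_sum_div_of_modEq {K : Type*} [Field K] [CharZero K] {t : K} {a c : ℤ}
    {p k : ℕ} (hp : p ≠ 0) (ht : t ^ p ^ k = a)
    (hac : a * c ^ p ^ k ≡ 1 [ZMOD (p : ℤ) ^ (k + 1)]) :
    IsIntegral ℤ ((∑ i ∈ Finset.range (p ^ k), ((c : K) * t) ^ i) / (p : K) ^ k) := by
  obtain ⟨y, hy⟩ := hac.symm.dvd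
  refine isIntegral_geom_sum_div_pow (y := (y : K)) ?_ (isIntegral_intCast y)
    (Nat.cast_ne_zero.mpr hp) ?_
  · exact (isIntegral_intCast c).mul
      (.of_pow (pow_pos (Nat.pos_of_ne_zero hp) k) (ht ▸ isIntegral_intCast a))
  · rw [mul_pow, ht]
    have hyK := congrArg (Int.cast : ℤ → K) hy
    push_cast at hyK
    linear_combination hyK

theorem pow_add_mul_geom_sum_div_eq {K : Type*} [Field K] {x y c w C z P : K} {e : ℕ}
    (hP : P ≠ 0) (hC : C ≠ 0) (hw : w * C * c ^ e = 1 + P * z) :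
    (x * y ^ e + w * C * x * ∑ i ∈ Finset.range e, (c * y) ^ i) / (P * C)
      = w * x * ((∑ i ∈ Finset.range (e + 1), (c * y) ^ i) / P) - z * (x * y ^ e / C) := by
  rw [Finset.sum_range_succ]
  field_simp
  linear_combination (-(x * y ^ e)) * hw

open Polynomial in
theorem theta_pow_add_delta_isIntegral_general (n : ℕ) (a : ℤ) (θ : ℂ) (hθ : θ ^ n = (a : ℂ))
    (p s : ℕ) (hp : p.Prime) (hps : p ^ s ∣ n) (hps' : ¬ p ^ (s + 1) ∣ n)
    (r : ℕ) (hr : r = padicValInt p (a ^ (p - 1) - 1) - 1)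
    (aa : ℕ → ℤ)
    (hfac : |a| = ∏ j ∈ Finset.Ico 1 n, aa j ^ j)
    (m : ℕ)
    (km jm : ℕ) (hkm : km ≤ min r s) (hmj : m = n - n / p ^ km + jm)
    (Cm : ℤ) (hCm : Cm = ∏ j ∈ Finset.Ico 1 n, aa j ^ (j * m / n))
    (b' : ℤ) (hb' : a * b' ≡ 1 [ZMOD (p : ℤ) ^ (km + 1)])
    (a' : ℤ) (ha' : a' = if km < s then b' ^ p ^ (s - km - 1) else b')
    (n'm : ℕ) (hn'm : n'm = n / p ^ km)
    (w : ℤ) (hw : w * Cm * a' ^ (p ^ km - 1) ≡ 1 [ZMOD (p : ℤ) ^ km])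
    (δ : ℂ) (hδ : δ = if 0 < km then
        (w : ℂ) * (Cm : ℂ) * θ ^ jm *
          ∑ j ∈ Finset.range (p ^ km - 1), ((a' : ℂ) * θ ^ n'm) ^ j
      else 0) :
    IsIntegral ℤ ((θ ^ m + δ) / ((p : ℂ) ^ km * (Cm : ℂ))) := by
  have hn : n ≠ 0 := by rintro rfl; exact hps' (dvd_zero _)
  have hθint : IsIntegral ℤ θ := .of_pow (Nat.pos_of_ne_zero hn) (hθ ▸ isIntegral_intCast a)
  have hθmC : IsIntegral ℤ (θ ^ m / Cm) := by
    refine isIntegral_pow_div_of_pow_dvd hn hθ ?_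
    rw [← dvd_abs, abs_pow, hfac, hCm]
    exact Finset.prod_pow_mul_div_pow_dvd _ _ _ _ _
  obtain rfl | hk := Nat.eq_zero_or_pos km
  · simpa [hδ] using hθmC
  rcases eq_or_ne (Cm : ℂ) 0 with hC | hC
  · simpa [hC] using isIntegral_zero
  have hmod : a * a' ^ p ^ km ≡ 1 [ZMOD (p : ℤ) ^ (km + 1)] := by
    obtain ⟨j, rfl⟩ : ∃ j, a' = b' ^ p ^ j := by
      split_ifs at ha'; exacts [⟨_, ha'⟩, ⟨0, by simpa using ha'⟩]
    rw [← pow_mul, ← pow_add]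
    refine Int.mul_pow_pow_modEq_one hp.ne_zero (Int.modEq_iff_dvd.mpr ?_).symm hb' _
    exact (pow_dvd_pow _ (by omega)).trans (padicValInt_dvd _)
  have hn' : p ^ km * n'm = n :=
    hn'm ▸ Nat.mul_div_cancel' ((pow_dvd_pow p (le_min_iff.mp hkm).2).trans hps)
  obtain ⟨e, he⟩ : ∃ e, p ^ km = e + 1 :=
    ⟨p ^ km - 1, (Nat.sub_add_cancel (Nat.one_le_pow _ _ hp.pos)).symm⟩
  have hθm : θ ^ m = θ ^ jm * (θ ^ n'm) ^ e := by
    rw [hmj, ← hn'm, ← hn', he, ← pow_mul, ← pow_add, add_mul, one_mul, Nat.add_sub_cancel]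
    ring_nf
  obtain ⟨z, hz⟩ := hw.symm.dvd
  have hzC : (w : ℂ) * Cm * a' ^ e = 1 + (p : ℂ) ^ km * z := by
    rw [he, Nat.add_sub_cancel] at hz
    exact_mod_cast sub_eq_iff_eq_add'.mp hz
  have hS := isIntegral_geom_sum_div_of_modEq (t := θ ^ n'm) hp.ne_zero
    (by rw [← pow_mul, mul_comm, hn', hθ]) hmod
  have hpk : (p : ℂ) ^ km ≠ 0 := pow_ne_zero _ (by exact_mod_cast hp.ne_zero)
  rw [hδ, if_pos hk, hθm, he, Nat.add_sub_cancel, pow_add_mul_geom_sum_div_eq hpk hC hzC, ← he,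
    ← hθm]
  exact (((isIntegral_intCast w).mul (hθint.pow _)).mul hS).sub ((isIntegral_intCast z).mul hθmC)

open Polynomial in
theorem theta_pow_add_delta_isIntegral (n : ℕ) (a : ℤ) (θ : ℂ) (hθ : θ ^ n = (a : ℂ))
    (hirr : Irreducible ((X : ℚ[X]) ^ n - C (a : ℚ)))
    (p s : ℕ) (hp : p.Prime) (hs : 1 ≤ s) (hps : p ^ s ∣ n) (hps' : ¬ p ^ (s + 1) ∣ n)
    (ha : ¬ (p : ℤ) ∣ a)
    (r : ℕ) (hr : r = padicValInt p (a ^ (p - 1) - 1) - 1) (hr1 : 1 ≤ r)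
    (aa : ℕ → ℤ) (hsq : ∀ j ∈ Finset.Ico 1 n, Squarefree (aa j))
    (hcop : ∀ i ∈ Finset.Ico 1 n, ∀ j ∈ Finset.Ico 1 n, i ≠ j → IsCoprime (aa i) (aa j))
    (hfac : |a| = ∏ j ∈ Finset.Ico 1 n, aa j ^ j)
    (m : ℕ) (hm : m ≤ n - 1)
    (km jm : ℕ) (hkm : km ≤ min r s) (hmj : m = n - n / p ^ km + jm)
    (hmax : ∀ k ≤ min r s, n - n / p ^ k ≤ m → k ≤ km)
    (Cm : ℤ) (hCm : Cm = ∏ j ∈ Finset.Ico 1 n, aa j ^ (j * m / n))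
    (b' : ℤ) (hb' : a * b' ≡ 1 [ZMOD (p : ℤ) ^ (km + 1)])
    (a' : ℤ) (ha' : a' = if km < s then b' ^ p ^ (s - km - 1) else b')
    (n'm : ℕ) (hn'm : n'm = n / p ^ km)
    (w : ℤ) (hw : w * Cm * a' ^ (p ^ km - 1) ≡ 1 [ZMOD (p : ℤ) ^ km])
    (δ : ℂ) (hδ : δ = if 0 < km then
        (w : ℂ) * (Cm : ℂ) * θ ^ jm *
          ∑ j ∈ Finset.range (p ^ km - 1), ((a' : ℂ) * θ ^ n'm) ^ j
      else 0) :
    IsIntegral ℤ ((θ ^ m + δ) / ((p : ℂ) ^ km * (Cm : ℂ))) :=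
  theta_pow_add_delta_isIntegral_general n a θ hθ p s hp hps hps' r hr aa hfac m km jm hkm hmj Cm
    hCm b' hb' a' ha' n'm hn'm w hw δ hδ
end
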